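/- Let $\xi>0$, $\rho\in(-1,1)$, $t\in[0,T]$, and $f,g:[0,T]\to\mathbb{C}$ bounded measurable with $\Re f=\Re g=0$. If $(f(t),g(t))\neq(0,0)$, then the quadratic polynomial $P(X)=\frac{\xi^2}{2}X^2-(1-\rho\xi f(t))X+g(t)+\frac{f^2(t)-f(t)}{2}$ has exactly two complex roots, one with strictly negative real part and one with strictly positive real part. If $(f(t),g(t))=(0,0)$, then $P$ has roots $0$ and $2/\xi^2$. -/

import Mathlib

open Set

/-!
The roots are `(B ± s) / ξ²` with `B = 1 - ρξf(t)`, so `Re B = 1`, and `s² = D` the discriminant.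
For purely imaginary `f(t), g(t)` one computes `Re D = 1 + ξ²(1 - ρ²)(Im f(t))² ≥ 1`, and `D = 1`
only when `f(t) = g(t) = 0`. Since `Re D = (Re s)² - (Im s)²`, this forces `|Re s| > 1 = |Re B|`,
so the imaginary axis separates the two roots.
-/

theorem one_lt_abs_re_of_eq_mul_self {D s : ℂ} (hs : D = s * s) (hre : 1 ≤ D.re) (hD : D ≠ 1) :
    1 < |s.re| := by
  have hDre : D.re = s.re ^ 2 - s.im ^ 2 := by rw [hs, Complex.mul_re]; ring
  have hDim : D.im = 2 * s.re * s.im := by rw [hs, Complex.mul_im]; ring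
  rw [← one_lt_sq_iff_one_lt_abs]
  by_contra! hle
  have him : s.im = 0 := by nlinarith [sq_nonneg s.im]
  exact hD (Complex.ext (by simp only [Complex.one_re]; nlinarith) (by simp [hDim, him]))

theorem exists_eq_mul_self_one_lt_re {D : ℂ} (hre : 1 ≤ D.re) (hD : D ≠ 1) :
    ∃ s : ℂ, D = s * s ∧ 1 < s.re := by
  obtain ⟨s, hs⟩ := IsAlgClosed.exists_eq_mul_self D
  rcases lt_abs.mp (one_lt_abs_re_of_eq_mul_self hs hre hD) with h | h
  · exact ⟨s, hs, h⟩
  · exact ⟨-s, by rw [hs, neg_mul_neg], by rwa [Complex.neg_re]⟩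

theorem exists_quadratic_roots_re_neg_pos {a : ℝ} (ha : 0 < a) {b c s : ℂ}
    (hs : discrim (a : ℂ) b c = s * s) (hbs : |b.re| < s.re) :
    ∃ r₁ r₂ : ℂ, r₁.re < 0 ∧ 0 < r₂.re ∧
      ∀ x : ℂ, (a : ℂ) * (x * x) + b * x + c = 0 ↔ x = r₁ ∨ x = r₂ := by
  have h2a : 2 * (a : ℂ) = ((2 * a : ℝ) : ℂ) := by push_cast; ring
  refine ⟨(-b - s) / (2 * a), (-b + s) / (2 * a), ?_, ?_, fun x => ?_⟩
  · rw [h2a, Complex.div_ofReal_re]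
    exact div_neg_of_neg_of_pos (by rw [Complex.sub_re, Complex.neg_re]; linarith [neg_abs_le b.re]) (by positivity)
  · rw [h2a, Complex.div_ofReal_re]
    exact div_pos (by rw [Complex.add_re, Complex.neg_re]; linarith [le_abs_self b.re]) (by positivity)
  · rw [quadratic_eq_zero_iff (by exact_mod_cast ha.ne') hs, or_comm]

section RiccatiQuadratic

variable {ξ ρ : ℝ} {f g : ℂ}

theorem discrim_riccati (hf : f.re = 0) (hg : g.re = 0) :
    discrim ((ξ ^ 2 / 2 : ℝ) : ℂ) (-(1 - ρ * ξ * f)) (g + (f ^ 2 - f) / 2) =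
      ⟨1 + ξ ^ 2 * (1 - ρ ^ 2) * f.im ^ 2, ξ ^ 2 * f.im - 2 * ρ * ξ * f.im - 2 * ξ ^ 2 * g.im⟩ := by
  apply Complex.ext <;> simp [discrim, pow_two, hf, hg] <;> ring

theorem one_le_re_discrim_riccati (hρ : ρ ^ 2 ≤ 1) (hf : f.re = 0) (hg : g.re = 0) :
    1 ≤ (discrim ((ξ ^ 2 / 2 : ℝ) : ℂ) (-(1 - ρ * ξ * f)) (g + (f ^ 2 - f) / 2)).re := by
  rw [discrim_riccati hf hg]
  have : 0 ≤ ξ ^ 2 * (1 - ρ ^ 2) * f.im ^ 2 := by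
    have : 0 ≤ 1 - ρ ^ 2 := by linarith
    positivity
  simpa using this

theorem discrim_riccati_ne_one (hξ : ξ ≠ 0) (hρ : ρ ^ 2 < 1) (hf : f.re = 0) (hg : g.re = 0)
    (hfg : (f, g) ≠ (0, 0)) :
    discrim ((ξ ^ 2 / 2 : ℝ) : ℂ) (-(1 - ρ * ξ * f)) (g + (f ^ 2 - f) / 2) ≠ 1 := by
  rw [discrim_riccati hf hg]
  intro h
  obtain ⟨hre, him⟩ := Complex.ext_iff.mp h
  simp only [Complex.one_re, Complex.one_im] at hre him
  have hfim : f.im = 0 := by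
    have : ξ ^ 2 * (1 - ρ ^ 2) ≠ 0 := mul_ne_zero (pow_ne_zero 2 hξ) (by linarith)
    simpa [this] using hre
  have hgim : g.im = 0 := by
    simp only [hfim, mul_zero, sub_zero, zero_sub, neg_eq_zero] at him
    simpa [hξ] using him
  exact hfg (by simp [Complex.ext_iff, hf, hg, hfim, hgim])

end RiccatiQuadratic

theorem stmt6 (ξ ρ T t : ℝ) (hξ : 0 < ξ) (hρ : ρ ∈ Ioo (-1:ℝ) 1)
    (ht : t ∈ Icc (0:ℝ) T)
    (f g : ℝ → ℂ)
    (hfre : ∀ s ∈ Icc (0:ℝ) T, (f s).re = 0)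
    (hgre : ∀ s ∈ Icc (0:ℝ) T, (g s).re = 0) :
    ((f t, g t) ≠ ((0:ℂ), (0:ℂ)) →
      ∃ r1 r2 : ℂ, r1 ≠ r2 ∧ r1.re < 0 ∧ 0 < r2.re ∧
        ∀ X : ℂ, ((ξ^2/2 : ℝ) : ℂ) * X^2 - (1 - (ρ:ℂ)*(ξ:ℂ)*f t) * X
            + g t + (f t ^ 2 - f t)/2 = 0 ↔ (X = r1 ∨ X = r2)) ∧
    ((f t, g t) = ((0:ℂ), (0:ℂ)) →
      ∀ X : ℂ, ((ξ^2/2 : ℝ) : ℂ) * X^2 - (1 - (ρ:ℂ)*(ξ:ℂ)*f t) * X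
          + g t + (f t ^ 2 - f t)/2 = 0 ↔ (X = 0 ∨ X = ((2/ξ^2 : ℝ) : ℂ))) := by
  have hf := hfre t ht
  have hg := hgre t ht
  have hρ2 : ρ ^ 2 < 1 := by nlinarith [hρ.1, hρ.2]
  have hpoly : ∀ X : ℂ, ((ξ^2/2 : ℝ) : ℂ) * X^2 - (1 - (ρ:ℂ)*(ξ:ℂ)*f t) * X
      + g t + (f t ^ 2 - f t)/2 = ((ξ^2/2 : ℝ) : ℂ) * (X * X) + -(1 - ρ * ξ * f t) * X
      + (g t + (f t ^ 2 - f t) / 2) := fun X => by ring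
  simp only [hpoly]
  constructor
  · intro hfg
    obtain ⟨s, hs, hs1⟩ := exists_eq_mul_self_one_lt_re (one_le_re_discrim_riccati hρ2.le hf hg)
      (discrim_riccati_ne_one hξ.ne' hρ2 hf hg hfg)
    obtain ⟨r₁, r₂, hr₁, hr₂, hroots⟩ :=
      exists_quadratic_roots_re_neg_pos (by positivity) hs (by simpa [hf] using hs1)
    exact ⟨r₁, r₂, fun h => by rw [h] at hr₁; linarith, hr₁, hr₂, hroots⟩
  · intro hfg X
    obtain ⟨hf0, hg0⟩ := Prod.mk.inj hfg
    have hξ0 : (ξ : ℂ) ≠ 0 := by exact_mod_cast hξ.ne'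
    rw [quadratic_eq_zero_iff (by exact_mod_cast (by positivity : ξ ^ 2 / 2 ≠ 0)) (s := 1)
      (by simp [discrim, hf0, hg0]), or_comm]
    simp only [hf0, mul_zero, sub_zero]
    push_cast
    congr! 2 <;> field_simp <;> ring
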